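/- Let α ∈ (1/4, 1/2). There exists a constant c > 0 such that for every h ∈ (0, 1], h² · ∫₀^∞ (r^(−α) / (1 + r^((1−2α)/2))) · min{ 1 / (1 + r^(1/2 − α)), h^(−1−2α) / (1 + r) } dr ≤ c · h^(2−2α). -/

import Mathlib

/-!
Write `β = 1/2 - α` and `C = h^(-1-2α)`. Since `1 / (1 + r^β) ≤ min 1 (r^(-β))`, the integrand is
at most `r^(-α)` on `(0, 1]`, `r^(α-1)` on `(1, h⁻²]` and `C r^(-3/2)` beyond `h⁻²`. These three
powers integrate to at most `1/(1-α)`, `h^(-2α)/α` and `2 C h = 2 h^(-2α)`, and after multiplying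
by `h²` each term is `O(h^(2-2α))`.
-/

open Real MeasureTheory Set

theorem setIntegral_Ioi_le_of_le_on_Ioc_Ioc_Ioi {f g₁ g₂ g₃ : ℝ → ℝ} {a b c : ℝ}
    (hab : a ≤ b) (hbc : b ≤ c) (hf : ∀ x ∈ Ioi a, 0 ≤ f x)
    (hg₁ : IntegrableOn g₁ (Ioc a b)) (hg₂ : IntegrableOn g₂ (Ioc b c))
    (hg₃ : IntegrableOn g₃ (Ioi c))
    (hfg₁ : ∀ x ∈ Ioc a b, f x ≤ g₁ x) (hfg₂ : ∀ x ∈ Ioc b c, f x ≤ g₂ x)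
    (hfg₃ : ∀ x ∈ Ioi c, f x ≤ g₃ x) :
    ∫ x in Ioi a, f x ≤
      (∫ x in Ioc a b, g₁ x) + (∫ x in Ioc b c, g₂ x) + ∫ x in Ioi c, g₃ x := by
  have hi₁ := (integrable_indicator_iff measurableSet_Ioc).2 hg₁
  have hi₂ := (integrable_indicator_iff measurableSet_Ioc).2 hg₂
  have hi₃ := (integrable_indicator_iff measurableSet_Ioi).2 hg₃
  set G := (Ioc a b).indicator g₁ + (Ioc b c).indicator g₂ + (Ioi c).indicator g₃
  have hfG : ∀ x ∈ Ioi a, f x ≤ G x := by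
    intro x hx
    simp only [G, Pi.add_apply]
    rcases le_or_gt x b with hxb | hbx
    · have h₁ : x ∈ Ioc a b := ⟨hx, hxb⟩
      have h₂ : x ∉ Ioc b c := fun h => h.1.not_ge hxb
      have h₃ : x ∉ Ioi c := (hxb.trans hbc).not_gt
      simpa [indicator_of_mem h₁, indicator_of_notMem h₂, indicator_of_notMem h₃] using hfg₁ x h₁
    have h₁ : x ∉ Ioc a b := fun h => hbx.not_ge h.2
    rcases le_or_gt x c with hxc | hcx
    · have h₂ : x ∈ Ioc b c := ⟨hbx, hxc⟩
      have h₃ : x ∉ Ioi c := hxc.not_gt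
      simpa [indicator_of_notMem h₁, indicator_of_mem h₂, indicator_of_notMem h₃] using hfg₂ x h₂
    · have h₂ : x ∉ Ioc b c := fun h => hcx.not_ge h.2
      have h₃ : x ∈ Ioi c := hcx
      simpa [indicator_of_notMem h₁, indicator_of_notMem h₂, indicator_of_mem h₃] using hfg₃ x h₃
  calc ∫ x in Ioi a, f x ≤ ∫ x in Ioi a, G x :=
        integral_mono_of_nonneg (ae_restrict_of_forall_mem measurableSet_Ioi hf)
          ((hi₁.add hi₂).add hi₃).integrableOn (ae_restrict_of_forall_mem measurableSet_Ioi hfG)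
    _ = _ := by
        rw [integral_add' (hi₁.add hi₂).integrableOn hi₃.integrableOn,
          integral_add' hi₁.integrableOn hi₂.integrableOn,
          setIntegral_indicator measurableSet_Ioc, setIntegral_indicator measurableSet_Ioc,
          setIntegral_indicator measurableSet_Ioi, inter_eq_right.2 Ioc_subset_Ioi_self,
          inter_eq_right.2 (Ioc_subset_Ioi_self.trans (Ioi_subset_Ioi hab)),
          inter_eq_right.2 (Ioi_subset_Ioi (hab.trans hbc))]

theorem integral_Ioc_zero_one_rpow {s : ℝ} (hs : -1 < s) :
    ∫ x in Ioc 0 1, x ^ s = 1 / (s + 1) := by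
  rw [← intervalIntegral.integral_of_le zero_le_one, integral_rpow (Or.inl hs),
    zero_rpow (by linarith), one_rpow, sub_zero]

theorem integral_Ioc_one_rpow_sub_one_le {s R : ℝ} (hs : 0 < s) (hR : 1 ≤ R) :
    ∫ x in Ioc 1 R, x ^ (s - 1) ≤ R ^ s / s := by
  rw [← intervalIntegral.integral_of_le hR, integral_rpow (Or.inl (by linarith)),
    sub_add_cancel, one_rpow]
  gcongr
  linarith

theorem one_div_one_add_rpow_le_one {r : ℝ} (hr : 0 ≤ r) (β : ℝ) : 1 / (1 + r ^ β) ≤ 1 :=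
  div_le_one_of_le₀ (le_add_of_nonneg_right (rpow_nonneg hr β)) (by positivity)

theorem one_div_one_add_rpow_le_rpow_neg {r : ℝ} (hr : 0 < r) (β : ℝ) :
    1 / (1 + r ^ β) ≤ r ^ (-β) := by
  rw [rpow_neg hr.le, ← one_div]
  exact one_div_le_one_div_of_le (rpow_pos_of_pos hr β) (le_add_of_nonneg_left zero_le_one)

theorem rpow_div_one_add_rpow_le_rpow_sub {r : ℝ} (hr : 0 < r) (a β : ℝ) :
    r ^ (-a) / (1 + r ^ β) ≤ r ^ (-a - β) := by
  rw [sub_eq_add_neg, rpow_add hr, div_eq_mul_one_div]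
  exact mul_le_mul_of_nonneg_left (one_div_one_add_rpow_le_rpow_neg hr β) (rpow_nonneg hr.le _)

section MinIntegrand

variable {r : ℝ} (a β C : ℝ)

theorem rpow_div_one_add_rpow_mul_min_nonneg (hr : 0 ≤ r) (hC : 0 ≤ C) :
    0 ≤ r ^ (-a) / (1 + r ^ β) * min (1 / (1 + r ^ β)) (C / (1 + r)) := by
  have := rpow_nonneg hr β
  have := rpow_nonneg hr (-a)
  exact mul_nonneg (by positivity) (le_min (by positivity) (by positivity))

theorem rpow_div_one_add_rpow_mul_min_le_rpow (hr : 0 ≤ r) :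
    r ^ (-a) / (1 + r ^ β) * min (1 / (1 + r ^ β)) (C / (1 + r)) ≤ r ^ (-a) := by
  have := rpow_nonneg hr β
  have := rpow_nonneg hr (-a)
  calc _ ≤ r ^ (-a) / (1 + r ^ β) :=
        mul_le_of_le_one_right (by positivity)
          ((min_le_left _ _).trans (one_div_one_add_rpow_le_one hr β))
    _ ≤ r ^ (-a) := div_le_self (by positivity) (le_add_of_nonneg_right (rpow_nonneg hr β))

theorem rpow_div_one_add_rpow_mul_min_le_rpow_sub (hr : 0 < r) :
    r ^ (-a) / (1 + r ^ β) * min (1 / (1 + r ^ β)) (C / (1 + r)) ≤ r ^ (-a - 2 * β) := by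
  have := rpow_pos_of_pos hr β
  have := rpow_pos_of_pos hr (-a)
  calc _ ≤ r ^ (-a) / (1 + r ^ β) * (1 / (1 + r ^ β)) :=
        mul_le_mul_of_nonneg_left (min_le_left _ _) (by positivity)
    _ ≤ r ^ (-a - β) * r ^ (-β) :=
        mul_le_mul (rpow_div_one_add_rpow_le_rpow_sub hr a β)
          (one_div_one_add_rpow_le_rpow_neg hr β) (by positivity) (rpow_nonneg hr.le _)
    _ = r ^ (-a - 2 * β) := by rw [← rpow_add hr]; ring_nf

theorem rpow_div_one_add_rpow_mul_min_le_mul_rpow (hr : 0 < r) (hC : 0 ≤ C) :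
    r ^ (-a) / (1 + r ^ β) * min (1 / (1 + r ^ β)) (C / (1 + r)) ≤ C * r ^ (-a - β - 1) := by
  have := rpow_pos_of_pos hr β
  have := rpow_pos_of_pos hr (-a)
  calc _ ≤ r ^ (-a) / (1 + r ^ β) * (C / (1 + r)) :=
        mul_le_mul_of_nonneg_left (min_le_right _ _) (by positivity)
    _ ≤ r ^ (-a - β) * (C / r) :=
        mul_le_mul (rpow_div_one_add_rpow_le_rpow_sub hr a β)
          (div_le_div_of_nonneg_left hC hr (by linarith)) (by positivity) (rpow_nonneg hr.le _)
    _ = C * r ^ (-a - β - 1) := by rw [rpow_sub hr _ 1, rpow_one]; ring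

end MinIntegrand

theorem integral_rpow_div_one_add_rpow_mul_min_le {α C R : ℝ} (hα₀ : 0 < α) (hα₁ : α < 1)
    (hC : 0 ≤ C) (hR : 1 ≤ R) :
    ∫ r in Ioi 0,
        r ^ (-α) / (1 + r ^ (1 / 2 - α)) * min (1 / (1 + r ^ (1 / 2 - α))) (C / (1 + r))
      ≤ 1 / (1 - α) + R ^ α / α + 2 * C * R ^ (-(1 / 2) : ℝ) := by
  have hR₀ : 0 < R := zero_lt_one.trans_le hR
  calc _ ≤ (∫ r in Ioc 0 1, r ^ (-α)) + (∫ r in Ioc 1 R, r ^ (α - 1))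
        + ∫ r in Ioi R, C * r ^ (-(3 / 2) : ℝ) := by
        refine setIntegral_Ioi_le_of_le_on_Ioc_Ioc_Ioi zero_le_one hR
          (fun r hr => rpow_div_one_add_rpow_mul_min_nonneg _ _ _ (le_of_lt hr) hC)
          (intervalIntegral.intervalIntegrable_rpow' (by linarith)).1
          (intervalIntegral.intervalIntegrable_rpow' (by linarith)).1
          ((integrableOn_Ioi_rpow_of_lt (by norm_num) hR₀).const_mul C)
          (fun r hr => rpow_div_one_add_rpow_mul_min_le_rpow _ _ _ hr.1.le)
          (fun r hr => ?_) (fun r hr => ?_)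
        · exact (rpow_div_one_add_rpow_mul_min_le_rpow_sub _ _ _
            (zero_lt_one.trans hr.1)).trans_eq (by ring_nf)
        · exact (rpow_div_one_add_rpow_mul_min_le_mul_rpow _ _ _
            (hR₀.trans hr) hC).trans_eq (by ring_nf)
    _ ≤ 1 / (1 - α) + R ^ α / α + 2 * C * R ^ (-(1 / 2) : ℝ) := by
        rw [integral_Ioc_zero_one_rpow (by linarith), integral_const_mul,
          integral_Ioi_rpow_of_lt (by norm_num) hR₀]
        exact add_le_add
          (add_le_add (le_of_eq (by ring_nf)) (integral_Ioc_one_rpow_sub_one_le hα₀ hR))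
          (le_of_eq (by ring_nf))

/-- Specialization of the contour-integral bound (4.23) with θ₁ = −1, θ₂ = 1 − 2α:
for α ∈ (1/4, 1/2) there is c > 0 such that for all h ∈ (0, 1],
h² ∫₀^∞ (r^(−α)/(1 + r^((1−2α)/2))) · min{1/(1 + r^(1/2−α)), h^(−1−2α)/(1 + r)} dr
  ≤ c h^(2−2α). -/
theorem integral_bound_theta_neg1 (α : ℝ) (hα : α ∈ Set.Ioo (1/4 : ℝ) (1/2)) :
    ∃ c : ℝ, 0 < c ∧ ∀ h ∈ Set.Ioc (0:ℝ) 1,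
      h ^ 2 * ∫ r in Set.Ioi (0:ℝ),
        (r ^ (-α) / (1 + r ^ ((1 - 2 * α) / 2))) *
          min (1 / (1 + r ^ (1 / 2 - α))) (h ^ (-1 - 2 * α) / (1 + r))
      ≤ c * h ^ (2 - 2 * α) := by
  obtain ⟨hα₁, hα₂⟩ := hα
  have hα₀ : 0 < α := by linarith
  have h1α : 0 < 1 - α := by linarith
  refine ⟨1 / (1 - α) + 1 / α + 2, by have := one_div_pos.2 h1α; positivity,
    fun h ⟨hh₀, hh₁⟩ => ?_⟩
  have hR : 1 ≤ h ^ (-2 : ℝ) := one_le_rpow_of_pos_of_le_one_of_nonpos hh₀ hh₁ (by norm_num)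
  have hI := integral_rpow_div_one_add_rpow_mul_min_le hα₀ (by linarith)
    (rpow_nonneg hh₀.le (-1 - 2 * α)) hR
  have hsq : h ^ 2 = h ^ (2 : ℝ) := (rpow_natCast h 2).symm
  have hmid : h ^ 2 * (h ^ (-2 : ℝ)) ^ α = h ^ (2 - 2 * α) := by
    rw [hsq, ← rpow_mul hh₀.le, ← rpow_add hh₀]; ring_nf
  have htail :
      h ^ 2 * (h ^ (-1 - 2 * α) * (h ^ (-2 : ℝ)) ^ (-(1 / 2) : ℝ)) = h ^ (2 - 2 * α) := by
    rw [hsq, ← rpow_mul hh₀.le, ← rpow_add hh₀, ← rpow_add hh₀]; ring_nf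
  have hhead : h ^ 2 ≤ h ^ (2 - 2 * α) := by
    rw [hsq]; exact rpow_le_rpow_of_exponent_ge hh₀ hh₁ (by linarith)
  rw [show (1 - 2 * α) / 2 = 1 / 2 - α by ring]
  calc _ ≤ h ^ 2 * (1 / (1 - α) + (h ^ (-2 : ℝ)) ^ α / α
          + 2 * h ^ (-1 - 2 * α) * (h ^ (-2 : ℝ)) ^ (-(1 / 2) : ℝ)) :=
        mul_le_mul_of_nonneg_left hI (by positivity)
    _ = h ^ 2 / (1 - α) + h ^ 2 * (h ^ (-2 : ℝ)) ^ α / α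
          + 2 * (h ^ 2 * (h ^ (-1 - 2 * α) * (h ^ (-2 : ℝ)) ^ (-(1 / 2) : ℝ))) := by ring
    _ = h ^ 2 / (1 - α) + h ^ (2 - 2 * α) / α + 2 * h ^ (2 - 2 * α) := by rw [hmid, htail]
    _ ≤ h ^ (2 - 2 * α) / (1 - α) + h ^ (2 - 2 * α) / α + 2 * h ^ (2 - 2 * α) := by gcongr
    _ = (1 / (1 - α) + 1 / α + 2) * h ^ (2 - 2 * α) := by ring
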